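/- arXiv:2009.09572 — 2 statements merged into one kernel-verified Lean document; each statement's English description precedes it below -/
import Mathlib

section
/- For the fractional kernel K(t) = c·t^{α-1}/Γ(α) with c > 0 and α ∈ (0,1], the function R(t) = c·t^{α-1}·E_{α,α}(-c t^α) satisfies (K*R)(t) = K(t) - R(t) for all t > 0, where E_{α,β}(z) = Σ_{n≥0} z^n/Γ(αn+β) is the Mittag-Leffler function. -/
open MeasureTheory intervalIntegral

/-- The (real) Mittag-Leffler function `E_{α,β}(z) = ∑_{n≥0} zⁿ / Γ(α n + β)`. -/
noncomputable def mittagLeffler (α β z : ℝ) : ℝ :=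
  ∑' n : ℕ, z ^ n / Real.Gamma (α * n + β)

/-!
Write `k_a(t) = t^(a-1) / Γ(a)` (`fracKernel a t`). By the Beta integral these Riemann–Liouville
kernels form a convolution semigroup, `k_a * k_b = k_(a+b)`. Now `K = c k_α` and
`R = ∑_{n≥0} c (-c)ⁿ k_(α(n+1))`, so convolving termwise gives
`K * R = ∑_{n≥0} c² (-c)ⁿ k_(α(n+2)) = K - R`. The interchange of sum and integral is justified by
absolute convergence of the Mittag-Leffler series, which follows by the ratio test from
`Γ(y + α) ≥ y^α Γ(y) / 2`, itself a consequence of the log-convexity of `Γ`.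
-/

namespace Real

theorem mul_Gamma_le_Gamma_add_mul_rpow {y α : ℝ} (hy : 0 < y) (hα : 0 < α) (hα1 : α ≤ 1) :
    y * Gamma y ≤ (y + α) ^ (1 - α) * Gamma (y + α) := by
  rcases hα1.lt_or_eq with hlt | rfl
  · have hyα : 0 < y + α := by linarith
    have h := Gamma_mul_add_mul_le_rpow_Gamma_mul_rpow_Gamma hyα (by linarith : 0 < y + α + 1)
      hα (sub_pos.2 hlt) (add_sub_cancel α 1)
    rwa [show α * (y + α) + (1 - α) * (y + α + 1) = y + 1 by ring, Gamma_add_one hy.ne',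
      Gamma_add_one hyα.ne', mul_rpow hyα.le (Gamma_pos_of_pos hyα).le, mul_left_comm,
      ← rpow_add (Gamma_pos_of_pos hyα), add_sub_cancel, rpow_one] at h
  · simp [Gamma_add_one hy.ne']

theorem rpow_mul_Gamma_le_two_mul_Gamma_add {y α : ℝ} (hα : 0 < α) (hα1 : α ≤ 1) (hy : α ≤ y) :
    y ^ α * Gamma y ≤ 2 * Gamma (y + α) := by
  have hy0 : 0 < y := hα.trans_le hy
  have hpow : (y + α) ^ (1 - α) ≤ 2 * y ^ (1 - α) :=
    calc (y + α) ^ (1 - α) ≤ (2 * y) ^ (1 - α) := by gcongr; linarith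
      _ = 2 ^ (1 - α) * y ^ (1 - α) := mul_rpow zero_le_two hy0.le
      _ ≤ 2 * y ^ (1 - α) := by
          gcongr
          exact rpow_le_self_of_one_le one_le_two (by linarith)
  refine le_of_mul_le_mul_right ?_ (rpow_pos_of_pos hy0 (1 - α))
  calc y ^ α * Gamma y * y ^ (1 - α) = y * Gamma y := by
        rw [mul_right_comm, ← rpow_add hy0, add_sub_cancel, rpow_one]
    _ ≤ (y + α) ^ (1 - α) * Gamma (y + α) := mul_Gamma_le_Gamma_add_mul_rpow hy0 hα hα1
    _ ≤ 2 * y ^ (1 - α) * Gamma (y + α) := by gcongr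
    _ = 2 * Gamma (y + α) * y ^ (1 - α) := by ring

open Filter in
theorem summable_pow_div_Gamma {α β : ℝ} (hα : 0 < α) (hα1 : α ≤ 1) (hβ : 0 < β) (x : ℝ) :
    Summable fun n : ℕ => x ^ n / Gamma (α * n + β) := by
  refine summable_of_ratio_norm_eventually_le (r := 1 / 2) (by norm_num) ?_
  have htend : Tendsto (fun n : ℕ => α * n + β) atTop atTop :=
    tendsto_atTop_add_const_right _ _
      ((tendsto_natCast_atTop_atTop (R := ℝ)).const_mul_atTop hα)
  filter_upwards [htend.eventually_ge_atTop α,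
    ((tendsto_rpow_atTop hα).comp htend).eventually_ge_atTop (4 * |x|)] with n hyα hpow
  set y := α * n + β
  have hy : 0 < y := hα.trans_le hyα
  have hΓ : 0 < Gamma y := Gamma_pos_of_pos hy
  have hratio : 2 * |x| * Gamma y ≤ Gamma (y + α) := by
    have := rpow_mul_Gamma_le_two_mul_Gamma_add hα hα1 hyα
    simp only [Function.comp_apply] at hpow
    nlinarith
  simp only [norm_div, norm_pow, Real.norm_eq_abs]
  rw [show α * ((n + 1 : ℕ) : ℝ) + β = y + α by push_cast; ring, abs_of_pos hΓ,
    abs_of_pos (Gamma_pos_of_pos (by linarith)), div_le_iff₀ (Gamma_pos_of_pos (by linarith))]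
  calc |x| ^ (n + 1) = |x| ^ n * |x| := pow_succ _ _
    _ ≤ |x| ^ n * (Gamma (y + α) / (2 * Gamma y)) := by
        gcongr
        rw [le_div_iff₀ (by positivity)]
        linarith
    _ = 1 / 2 * (|x| ^ n / Gamma y) * Gamma (y + α) := by field_simp

end Real

open Real

theorem integral_sub_rpow_mul_rpow {a b t : ℝ} (ha : 0 < a) (hb : 0 < b) (ht : 0 < t) :
    ∫ s in (0 : ℝ)..t, (t - s) ^ (a - 1) * s ^ (b - 1) =
      Gamma a * Gamma b / Gamma (a + b) * t ^ (a + b - 1) := by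
  have hcomplex : ∫ s in (0 : ℝ)..t, (((t - s) ^ (a - 1) * s ^ (b - 1) : ℝ) : ℂ) =
      ∫ s in (0 : ℝ)..t, (s : ℂ) ^ ((b : ℂ) - 1) * ((t : ℂ) - s) ^ ((a : ℂ) - 1) := by
    refine integral_congr fun s hs => ?_
    rw [Set.uIcc_of_le ht.le] at hs
    rw [Complex.ofReal_mul, Complex.ofReal_cpow (sub_nonneg.2 hs.2), Complex.ofReal_cpow hs.1]
    push_cast
    ring
  rw [intervalIntegral.integral_ofReal, Complex.betaIntegral_scaled _ _ ht,
    Complex.betaIntegral_eq_Gamma_mul_div _ _ (by simpa) (by simpa)] at hcomplex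
  have hreal : ((Gamma a * Gamma b / Gamma (a + b) * t ^ (a + b - 1) : ℝ) : ℂ) =
      (t : ℂ) ^ ((b : ℂ) + a - 1) *
        (Complex.Gamma b * Complex.Gamma a / Complex.Gamma (b + a)) := by
    rw [add_comm (b : ℂ), ← Complex.ofReal_add, Complex.Gamma_ofReal, Complex.Gamma_ofReal,
      Complex.Gamma_ofReal]
    push_cast [Complex.ofReal_cpow ht.le]
    ring_nf
  exact_mod_cast hcomplex.trans hreal.symm

noncomputable def fracKernel (a t : ℝ) : ℝ := t ^ (a - 1) / Gamma a

theorem fracKernel_nonneg {a t : ℝ} (ha : 0 < a) (ht : 0 ≤ t) : 0 ≤ fracKernel a t :=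
  div_nonneg (rpow_nonneg ht _) (Gamma_pos_of_pos ha).le

theorem integral_fracKernel_mul_fracKernel {a b t : ℝ} (ha : 0 < a) (hb : 0 < b) (ht : 0 < t) :
    ∫ s in (0 : ℝ)..t, fracKernel a (t - s) * fracKernel b s = fracKernel (a + b) t := by
  have hΓa := (Gamma_pos_of_pos ha).ne'
  have hΓb := (Gamma_pos_of_pos hb).ne'
  simp only [fracKernel, div_mul_div_comm]
  rw [intervalIntegral.integral_div, integral_sub_rpow_mul_rpow ha hb ht]
  field_simp

theorem intervalIntegrable_fracKernel_mul_fracKernel {a b t : ℝ} (ha : 0 < a) (hb : 0 < b)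
    (ht : 0 < t) :
    IntervalIntegrable (fun s => fracKernel a (t - s) * fracKernel b s) volume 0 t := by
  -- a function that is not integrable has integral `0`
  refine intervalIntegrable_of_integral_ne_zero ?_
  rw [integral_fracKernel_mul_fracKernel ha hb ht]
  exact (div_pos (rpow_pos_of_pos ht _) (Gamma_pos_of_pos (add_pos ha hb))).ne'

theorem integral_fracKernel_mul_tsum {a t : ℝ} (ha : 0 < a) (ht : 0 < t) {b u : ℕ → ℝ}
    (hb : ∀ n, 0 < b n) (hu : Summable fun n => |u n| * fracKernel (a + b n) t) :
    ∫ s in (0 : ℝ)..t, fracKernel a (t - s) * ∑' n, u n * fracKernel (b n) s =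
      ∑' n, u n * fracKernel (a + b n) t := by
  set F : ℕ → ℝ → ℝ := fun n s => u n * (fracKernel a (t - s) * fracKernel (b n) s)
  have hint (n : ℕ) : IntegrableOn (F n) (Set.Ioc 0 t) :=
    ((intervalIntegrable_iff_integrableOn_Ioc_of_le ht.le).1
      (intervalIntegrable_fracKernel_mul_fracKernel ha (hb n) ht)).const_mul (u n)
  have hnorm (n : ℕ) : ∫ s in Set.Ioc 0 t, ‖F n s‖ = |u n| * fracKernel (a + b n) t := by
    have habs : Set.EqOn (fun s => ‖F n s‖)
        (fun s => |u n| * (fracKernel a (t - s) * fracKernel (b n) s)) (Set.Ioc 0 t) :=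
      fun s hs => by
        simp only [F, norm_mul, Real.norm_eq_abs,
          abs_of_nonneg (fracKernel_nonneg ha (sub_nonneg.2 hs.2)),
          abs_of_nonneg (fracKernel_nonneg (hb n) hs.1.le)]
    rw [setIntegral_congr_fun measurableSet_Ioc habs, MeasureTheory.integral_const_mul,
      ← integral_of_le ht.le, integral_fracKernel_mul_fracKernel ha (hb n) ht]
  rw [integral_of_le ht.le]
  calc ∫ s in Set.Ioc 0 t, fracKernel a (t - s) * ∑' n, u n * fracKernel (b n) s
      = ∫ s in Set.Ioc 0 t, ∑' n, F n s := by simp only [F, ← tsum_mul_left, mul_left_comm]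
    _ = ∑' n, ∫ s in Set.Ioc 0 t, F n s :=
        (integral_tsum_of_summable_integral_norm hint (by simpa only [hnorm] using hu)).symm
    _ = ∑' n, u n * fracKernel (a + b n) t := tsum_congr fun n => by
        rw [MeasureTheory.integral_const_mul, ← integral_of_le ht.le,
          integral_fracKernel_mul_fracKernel ha (hb n) ht]

theorem rpow_mul_pow_div_Gamma_eq {s : ℝ} (hs : 0 < s) (α β w : ℝ) (n : ℕ) :
    s ^ (β - 1) * ((w * s ^ α) ^ n / Gamma (α * n + β)) = w ^ n * fracKernel (α * n + β) s := by
  rw [fracKernel, mul_pow, ← rpow_natCast (s ^ α), ← rpow_mul hs.le,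
    show α * n + β - 1 = α * n + (β - 1) by ring, rpow_add hs]
  ring

theorem rpow_mul_mittagLeffler {s : ℝ} (hs : 0 < s) (α β w : ℝ) :
    s ^ (β - 1) * mittagLeffler α β (w * s ^ α) = ∑' n : ℕ, w ^ n * fracKernel (α * n + β) s := by
  rw [mittagLeffler, ← tsum_mul_left]
  exact tsum_congr (rpow_mul_pow_div_Gamma_eq hs α β w)

theorem summable_pow_mul_fracKernel {α β s : ℝ} (hα : 0 < α) (hα1 : α ≤ 1) (hβ : 0 < β)
    (hs : 0 < s) (w : ℝ) : Summable fun n : ℕ => w ^ n * fracKernel (α * n + β) s := by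
  simpa only [rpow_mul_pow_div_Gamma_eq hs] using
    (summable_pow_div_Gamma hα hα1 hβ (w * s ^ α)).mul_left (s ^ (β - 1))

theorem fractional_kernel_resolvent_general (c α : ℝ) (hα : 0 < α) (hα1 : α ≤ 1)
    (K R : ℝ → ℝ)
    (hK : ∀ t, K t = c * t ^ (α - 1) / Real.Gamma α)
    (hR : ∀ t, R t = c * t ^ (α - 1) * mittagLeffler α α (-(c * t ^ α))) :
    ∀ t > (0 : ℝ), (∫ s in (0:ℝ)..t, K (t - s) * R s) = K t - R t := by
  intro t ht
  have hK' (s : ℝ) : K s = c * fracKernel α s := by rw [hK, fracKernel, mul_div_assoc]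
  have hR' (s : ℝ) (hs : 0 < s) : R s = c * ∑' n : ℕ, (-c) ^ n * fracKernel (α * n + α) s := by
    rw [hR, mul_assoc, ← neg_mul, rpow_mul_mittagLeffler hs]
  have hshift (n : ℕ) : α + (α * n + α) = α * (n + 1 : ℕ) + α := by push_cast; ring
  have hsummable : Summable fun n : ℕ => |(-c) ^ n| * fracKernel (α + (α * n + α)) t := by
    simpa only [abs_pow, abs_neg, show ∀ n : ℕ, α + (α * n + α) = α * n + 2 * α by grind] using
      summable_pow_mul_fracKernel hα hα1 (by positivity) ht |c|
  have hconv : ∫ s in (0 : ℝ)..t, K (t - s) * R s =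
      c * (c * ∑' n : ℕ, (-c) ^ n * fracKernel (α + (α * n + α)) t) := by
    rw [← integral_fracKernel_mul_tsum hα ht (fun n => by positivity) hsummable,
      ← intervalIntegral.integral_const_mul, ← intervalIntegral.integral_const_mul]
    refine integral_congr_ae (ae_of_all _ fun s hs => ?_)
    rw [Set.uIoc_of_le ht.le] at hs
    rw [hK', hR' s hs.1]
    ring
  rw [hconv, hK', hR' t ht, (summable_pow_mul_fracKernel hα hα1 hα ht (-c)).tsum_eq_zero_add]
  simp only [pow_zero, Nat.cast_zero, mul_zero, zero_add, one_mul, ← hshift, pow_succ', mul_assoc,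
    tsum_mul_left]
  ring

/-- For the fractional kernel `K(t) = c·t^{α-1}/Γ(α)` with `c > 0` and `α ∈ (0,1]`, the
function `R(t) = c·t^{α-1}·E_{α,α}(-c t^α)` satisfies `(K*R)(t) = K(t) - R(t)` for all
`t > 0`. -/
theorem fractional_kernel_resolvent (c α : ℝ) (hc : 0 < c) (hα : 0 < α) (hα1 : α ≤ 1)
    (K R : ℝ → ℝ)
    (hK : ∀ t, K t = c * t ^ (α - 1) / Real.Gamma α)
    (hR : ∀ t, R t = c * t ^ (α - 1) * mittagLeffler α α (-(c * t ^ α))) :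
    ∀ t > (0 : ℝ), (∫ s in (0:ℝ)..t, K (t - s) * R s) = K t - R t :=
  fractional_kernel_resolvent_general c α hα hα1 K R hK hR
end

section
/- For the fractional kernel K(t) = t^{α-1}/Γ(α) with α ∈ (1/2, 1], for every T < ∞ there exists γ ∈ (0,2] and C > 0 such that ∫₀ᵀ (K(t+h) - K(t))² dt ≤ C h^γ for all sufficiently small h > 0. -/
open MeasureTheory intervalIntegral Set

/-! For a kernel `K ≥ 0` that decreases on `(0, ∞)`, `(K(t+h) - K(t))² ≤ K(t)² - K(t+h)²`, so the
integral over `[0, T]` telescopes to at most `∫₀ʰ K²`. For `K(t) = t^{α-1}/Γ(α)` this is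
`h^{2α-1} / ((2α-1) Γ(α)²)`, which is finite exactly because `α > 1/2`; hence `γ = 2α - 1`. -/

section AntitoneShift

variable {f : ℝ → ℝ} (hf : AntitoneOn f (Ioi 0)) (hf_nonneg : ∀ t, 0 < t → 0 ≤ f t)
include hf hf_nonneg

theorem sq_shift_sub_le_sq_sub_sq_shift {t h : ℝ} (ht : 0 < t) (hh : 0 ≤ h) :
    (f (t + h) - f t) ^ 2 ≤ f t ^ 2 - f (t + h) ^ 2 := by
  have hth : 0 < t + h := by linarith
  have hle : f (t + h) ≤ f t := hf ht hth (by linarith)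
  nlinarith [hf_nonneg _ hth]

theorem intervalIntegrable_sq_shift_sub {T h : ℝ} (hT : 0 ≤ T) (hh : 0 ≤ h)
    (hint : IntervalIntegrable (fun t => f t ^ 2) volume 0 T) :
    IntervalIntegrable (fun t => (f (t + h) - f t) ^ 2) volume 0 T := by
  rw [intervalIntegrable_iff_integrableOn_Ioc_of_le hT]
  have hshift : AntitoneOn (fun t => f (t + h)) (Ioc 0 T) := fun s hs t ht hst =>
    hf (show 0 < s + h by linarith [hs.1]) (show 0 < t + h by linarith [ht.1]) (by linarith)
  have hmeas : AEStronglyMeasurable (fun t => (f (t + h) - f t) ^ 2)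
      (volume.restrict (Ioc 0 T)) :=
    (((aemeasurable_restrict_of_antitoneOn measurableSet_Ioc hshift).sub
      (aemeasurable_restrict_of_antitoneOn measurableSet_Ioc
        (hf.mono fun _ ht => ht.1))).pow_const 2).aestronglyMeasurable
  refine hint.1.mono' hmeas ?_
  filter_upwards [ae_restrict_mem measurableSet_Ioc] with t ht
  rw [Real.norm_eq_abs, abs_of_nonneg (sq_nonneg _)]
  linarith [sq_shift_sub_le_sq_sub_sq_shift hf hf_nonneg ht.1 hh, sq_nonneg (f (t + h))]

theorem integral_sq_shift_sub_le {T h : ℝ} (hT : 0 ≤ T) (hh : 0 ≤ h)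
    (hint : IntervalIntegrable (fun t => f t ^ 2) volume 0 (T + h)) :
    ∫ t in 0..T, (f (t + h) - f t) ^ 2 ≤ ∫ t in 0..h, f t ^ 2 := by
  set F : ℝ → ℝ := fun t => f t ^ 2
  have hF : ∀ a b, a ∈ uIcc 0 (T + h) → b ∈ uIcc 0 (T + h) → IntervalIntegrable F volume a b :=
    fun a b ha hb => hint.mono_set (uIcc_subset_uIcc ha hb)
  have h0 : (0 : ℝ) ∈ uIcc 0 (T + h) := left_mem_uIcc
  have hTh : T + h ∈ uIcc 0 (T + h) := right_mem_uIcc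
  have hT' : T ∈ uIcc 0 (T + h) := by rw [uIcc_of_le (by linarith)]; constructor <;> linarith
  have hh' : h ∈ uIcc 0 (T + h) := by rw [uIcc_of_le (by linarith)]; constructor <;> linarith
  have hshift : IntervalIntegrable (fun t => F (t + h)) volume 0 T := by
    simpa using (hF h (T + h) hh' hTh).comp_add_right h
  have htail : 0 ≤ ∫ t in T..T + h, F t :=
    integral_nonneg (by linarith) fun t _ => sq_nonneg (f t)
  calc ∫ t in 0..T, (f (t + h) - f t) ^ 2
      ≤ ∫ t in 0..T, (F t - F (t + h)) :=
        integral_mono_on_of_le_Ioo hT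
          (intervalIntegrable_sq_shift_sub hf hf_nonneg hT hh (hF 0 T h0 hT'))
          ((hF 0 T h0 hT').sub hshift)
          fun t ht => sq_shift_sub_le_sq_sub_sq_shift hf hf_nonneg ht.1 hh
    _ = (∫ t in 0..T, F t) - ∫ t in h..T + h, F t := by
        rw [integral_sub (hF 0 T h0 hT') hshift, integral_comp_add_right F h, zero_add]
    _ = (∫ t in 0..h, F t) - ∫ t in T..T + h, F t := by
        rw [← integral_add_adjacent_intervals (hF 0 h h0 hh') (hF h T hh' hT'),
          ← integral_add_adjacent_intervals (hF h T hh' hT') (hF T (T + h) hT' hTh)]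
        ring
    _ ≤ ∫ t in 0..h, F t := by linarith

end AntitoneShift

section RpowKernel

variable {α : ℝ}

theorem sq_rpow_sub_one {t : ℝ} (ht : 0 ≤ t) : (t ^ (α - 1)) ^ 2 = t ^ (2 * α - 2) := by
  rw [← Real.rpow_mul_natCast ht]; ring_nf

theorem intervalIntegrable_sq_rpow_sub_one (hα : 1 / 2 < α) {b : ℝ} (hb : 0 ≤ b) :
    IntervalIntegrable (fun t => (t ^ (α - 1)) ^ 2) volume 0 b :=
  (intervalIntegrable_rpow' (r := 2 * α - 2) (by linarith)).congr fun t ht => by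
    rw [uIoc_of_le hb] at ht
    exact (sq_rpow_sub_one ht.1.le).symm

theorem integral_sq_rpow_sub_one (hα : 1 / 2 < α) {h : ℝ} (hh : 0 ≤ h) :
    ∫ t in 0..h, (t ^ (α - 1)) ^ 2 = h ^ (2 * α - 1) / (2 * α - 1) := by
  have hsq : EqOn (fun t => (t ^ (α - 1)) ^ 2) (fun t => t ^ (2 * α - 2)) (uIcc 0 h) :=
    fun t ht => sq_rpow_sub_one (by rw [uIcc_of_le hh] at ht; exact ht.1)
  rw [integral_congr hsq, integral_rpow (Or.inl (by linarith)), Real.zero_rpow (by linarith)]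
  ring_nf

end RpowKernel

/-- For the fractional kernel `K(t) = t^{α-1}/Γ(α)` with `α ∈ (1/2, 1]`, for every `T < ∞`
there exist `γ ∈ (0,2]` and `C > 0` such that `∫₀ᵀ (K(t+h) - K(t))² dt ≤ C h^γ` for all
sufficiently small `h > 0`. -/
theorem fractional_kernel_shift_L2 (α : ℝ) (hα : 1/2 < α) (hα1 : α ≤ 1)
    (K : ℝ → ℝ) (hK : ∀ t, K t = t ^ (α - 1) / Real.Gamma α) :
    ∀ T : ℝ, 0 < T →
      ∃ γ : ℝ, 0 < γ ∧ γ ≤ 2 ∧ ∃ C > (0:ℝ), ∃ h₀ > (0:ℝ), ∀ h : ℝ, 0 < h → h ≤ h₀ →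
        (∫ t in (0:ℝ)..T, (K (t + h) - K t) ^ 2) ≤ C * h ^ γ := by
  intro T hT
  obtain rfl : K = fun t => t ^ (α - 1) / Real.Gamma α := funext hK
  have hΓ : 0 < Real.Gamma α := Real.Gamma_pos_of_pos (by linarith)
  have hanti : AntitoneOn (fun t : ℝ => t ^ (α - 1) / Real.Gamma α) (Ioi 0) :=
    fun s hs t ht hst => div_le_div_of_nonneg_right
      (Real.antitoneOn_rpow_Ioi_of_exponent_nonpos (by linarith) hs ht hst) hΓ.le
  have hnonneg : ∀ t : ℝ, 0 < t → 0 ≤ t ^ (α - 1) / Real.Gamma α := fun t _ => by positivity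
  have hγ : 0 < 2 * α - 1 := by linarith
  refine ⟨2 * α - 1, hγ, by linarith, 1 / ((2 * α - 1) * Real.Gamma α ^ 2), by positivity,
    1, one_pos, fun h hh _ => ?_⟩
  have hint : IntervalIntegrable (fun t : ℝ => (t ^ (α - 1) / Real.Gamma α) ^ 2)
      volume 0 (T + h) := by
    simpa only [div_pow] using
      (intervalIntegrable_sq_rpow_sub_one hα (by linarith)).div_const (Real.Gamma α ^ 2)
  calc _ ≤ ∫ t in 0..h, (t ^ (α - 1) / Real.Gamma α) ^ 2 :=
        integral_sq_shift_sub_le hanti hnonneg hT.le hh.le hint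
    _ = _ := by
        simp only [div_pow, intervalIntegral.integral_div, integral_sq_rpow_sub_one hα hh.le]
        rw [div_div, one_div_mul_eq_div]
end
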